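/- arXiv:0907.5074 — 7 statements merged into one kernel-verified Lean document; each statement's English description precedes it below -/
import Mathlib

section
/- If a behavior b : ℝ≥0 → Set P is non-Berkeley for some δ > 0 (i.e., for every time t there exists u with t ∈ [u, u+δ] and b constant on [u, u+δ]), then b is non-Zeno, i.e., the set of discontinuity (transition) points of b has no accumulation point in ℝ≥0. -/
open Set

/-- A behavior `b : ℝ≥0 → Set P` (modeled on ℝ, with all conditions restricted to
nonnegative times) is non-Berkeley for `δ`: every time `t ≥ 0` lies in a closed
interval `[u, u+δ]` (with `u ≥ 0`) on which `b` is constant. -/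
def NonBerkeley {P : Type*} (b : ℝ → Set P) (δ : ℝ) : Prop :=
  ∀ t : ℝ, 0 ≤ t → ∃ u : ℝ, 0 ≤ u ∧ u ≤ t ∧ t ≤ u + δ ∧
    ∀ s₁ ∈ Icc u (u + δ), ∀ s₂ ∈ Icc u (u + δ), b s₁ = b s₂

/-- `t` is a transition (discontinuity) point of `b` on ℝ≥0: `b` is not constant on
any neighborhood of `t` restricted to ℝ≥0. -/
def TransitionPt {P : Type*} (b : ℝ → Set P) (t : ℝ) : Prop :=
  0 ≤ t ∧ ∀ ε > 0, ∃ s₁ s₂ : ℝ, 0 ≤ s₁ ∧ 0 ≤ s₂ ∧ |s₁ - t| < ε ∧ |s₂ - t| < ε ∧ b s₁ ≠ b s₂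

/-- No transition point lies in the open interior of a constancy interval. -/
lemma no_transition_interior {P : Type*} (b : ℝ → Set P) {u δ t : ℝ}
    (hconst : ∀ s₁ ∈ Icc u (u + δ), ∀ s₂ ∈ Icc u (u + δ), b s₁ = b s₂)
    (h1 : u < t) (h2 : t < u + δ) : ¬ TransitionPt b t := by
  rintro ⟨-, ht⟩
  obtain ⟨s₁, s₂, -, -, hs₁, hs₂, hne⟩ := ht (min (t - u) (u + δ - t))
    (lt_min (by linarith) (by linarith))
  apply hne
  apply hconst
  · constructor
    · have ha := (abs_lt.mp hs₁).1
      have hl := min_le_left (t - u) (u + δ - t)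
      linarith
    · have ha := (abs_lt.mp hs₁).2
      have hr := min_le_right (t - u) (u + δ - t)
      linarith
  · constructor
    · have ha := (abs_lt.mp hs₂).1
      have hl := min_le_left (t - u) (u + δ - t)
      linarith
    · have ha := (abs_lt.mp hs₂).2
      have hr := min_le_right (t - u) (u + δ - t)
      linarith

/-- Distinct transition points of a non-Berkeley behavior are at least `δ` apart. -/
lemma transition_sep {P : Type*} (b : ℝ → Set P) (δ : ℝ) (hδ : 0 < δ)
    (hb : NonBerkeley b δ) {t₁ t₂ : ℝ} (h₁ : TransitionPt b t₁) (h₂ : TransitionPt b t₂)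
    (hlt : t₁ < t₂) : δ ≤ t₂ - t₁ := by
  have ht₁0 := h₁.1
  set m := (t₁ + t₂) / 2 with hm
  obtain ⟨u, hu0, hum, hmu, hconst⟩ := hb m (by nlinarith [h₂.1])
  have hA : t₁ ≤ u := by
    by_contra h
    push_neg at h
    exact no_transition_interior b hconst h (by linarith [hum, hmu]) h₁
  have hB : u + δ ≤ t₂ := by
    by_contra h
    push_neg at h
    exact no_transition_interior b hconst (by linarith [hum]) h h₂
  linarith

/-- A non-Berkeley behavior is non-Zeno: its set of transition points has no
accumulation point in ℝ≥0. -/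
theorem nonBerkeley_nonZeno {P : Type*} (b : ℝ → Set P) (δ : ℝ) (hδ : 0 < δ)
    (hb : NonBerkeley b δ) :
    ∀ x : ℝ, 0 ≤ x → ¬ AccPt x (Filter.principal {t : ℝ | TransitionPt b t}) := by
  intro x hx hacc
  rw [accPt_iff_nhds] at hacc
  obtain ⟨t₁, ⟨ht₁b, ht₁⟩, ht₁x⟩ := hacc (Metric.ball x (δ/2)) (Metric.ball_mem_nhds x (by linarith))
  obtain ⟨t₂, ⟨ht₂b, ht₂⟩, ht₂x⟩ := hacc (Metric.ball x (min (δ/2) |t₁ - x|))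
    (Metric.ball_mem_nhds x (lt_min (by linarith) (abs_sub_pos.mpr ht₁x)))
  have hd₁ : |t₁ - x| < δ/2 := by simpa [Real.dist_eq] using ht₁b
  have hd₂ : |t₂ - x| < δ/2 := lt_of_lt_of_le (by simpa [Real.dist_eq] using ht₂b) (min_le_left _ _)
  have hne : t₂ ≠ t₁ := by
    intro h
    have : |t₂ - x| < |t₁ - x| :=
      lt_of_lt_of_le (by simpa [Real.dist_eq] using ht₂b) (min_le_right _ _)
    rw [h] at this; exact lt_irrefl _ this
  have hclose : |t₂ - t₁| < δ := by
    have := abs_sub_abs_le_abs_sub t₂ t₁  -- unused, use triangle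
    calc |t₂ - t₁| ≤ |t₂ - x| + |x - t₁| := abs_sub_le _ _ _
      _ = |t₂ - x| + |t₁ - x| := by rw [abs_sub_comm x t₁]
      _ < δ := by linarith
  rcases lt_or_gt_of_ne hne with h | h
  · have := transition_sep b δ hδ hb ht₂ ht₁ h
    rw [abs_sub_comm] at hclose
    have : δ ≤ |t₁ - t₂| := le_trans this (le_abs_self _)
    linarith
  · have := transition_sep b δ hδ hb ht₁ ht₂ h
    have : δ ≤ |t₂ - t₁| := le_trans this (le_abs_self _)
    linarith
end

section
/- If a behavior b : ℝ≥0 → Set P is non-Berkeley for δ > 0, then any two distinct transition points t₁ < t₂ of b satisfy t₂ - t₁ ≥ δ. -/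
open Set

/-! A window `[u, u + δ]` on which `b` is constant, chosen around the midpoint of `t₁` and `t₂`,
has both transition points outside its interior; since `t₁` lies left and `t₂` right of the
midpoint, `t₁ ≤ u` and `u + δ ≤ t₂`. -/

theorem TransitionPt.notMem_Ioo {P : Type*} {b : ℝ → Set P} {u v c : ℝ}
    (hc : TransitionPt b c) (hconst : ∀ s₁ ∈ Icc u v, ∀ s₂ ∈ Icc u v, b s₁ = b s₂) :
    c ∉ Ioo u v := by
  intro hcuv
  obtain ⟨ε, hε, hball⟩ := Metric.mem_nhds_iff.1 (Icc_mem_nhds hcuv.1 hcuv.2)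
  obtain ⟨s₁, s₂, -, -, hs₁, hs₂, hne⟩ := hc.2 ε hε
  exact hne <| hconst s₁ (hball <| by rwa [Metric.mem_ball, Real.dist_eq])
    s₂ (hball <| by rwa [Metric.mem_ball, Real.dist_eq])

theorem transitionPoints_far_general {P : Type*} (b : ℝ → Set P) (δ : ℝ)
    (hb : NonBerkeley b δ) (t₁ t₂ : ℝ)
    (h₁ : TransitionPt b t₁) (h₂ : TransitionPt b t₂) (hlt : t₁ < t₂) :
    δ ≤ t₂ - t₁ := by
  obtain ⟨u, -, hut, htu, hconst⟩ := hb ((t₁ + t₂) / 2) (by linarith [h₁.1])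
  have hu₁ : t₁ ≤ u := by
    by_contra! h
    exact h₁.notMem_Ioo hconst ⟨h, by linarith⟩
  have hu₂ : u + δ ≤ t₂ := by
    by_contra! h
    exact h₂.notMem_Ioo hconst ⟨by linarith, h⟩
  linarith

/-- Two distinct transition points of a `δ`-non-Berkeley behavior are at least `δ` apart. -/
theorem transitionPoints_far {P : Type*} (b : ℝ → Set P) (δ : ℝ) (hδ : 0 < δ)
    (hb : NonBerkeley b δ) (t₁ t₂ : ℝ)
    (h₁ : TransitionPt b t₁) (h₂ : TransitionPt b t₂) (hlt : t₁ < t₂) :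
    δ ≤ t₂ - t₁ :=
  transitionPoints_far_general b δ hb t₁ t₂ h₁ h₂ hlt
end

section
/- If a behavior b : ℝ≥0 → Set P is non-Berkeley for δ > 0 and t > 0 is a transition point of b, then b is constant on the open interval (max(t−δ,0), t) and constant on the open interval (t, t+δ). In particular the left limit value b⁻(t) and right limit value b⁺(t) are well defined. -/
open Set Topology

lemma eq_of_forall_le_imp_eq {α β : Type*} [LinearOrder α] {f : α → β} {S : Set α}
    (h : ∀ x ∈ S, ∀ y ∈ S, x ≤ y → f x = f y) : ∀ x ∈ S, ∀ y ∈ S, f x = f y := by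
  intro x hx y hy
  rcases le_total x y with hxy | hyx
  · exact h x hx y hy hxy
  · exact (h y hy x hx hyx).symm

lemma exists_eq_of_forall_eq {α β : Type*} {f : α → β} {S : Set α} (hS : S.Nonempty)
    (h : ∀ x ∈ S, ∀ y ∈ S, f x = f y) : ∃ L, ∀ x ∈ S, f x = L :=
  let ⟨x₀, hx₀⟩ := hS
  ⟨f x₀, fun x hx => h x hx x₀ hx₀⟩

section

variable {P : Type*} {b : ℝ → Set P} {t δ : ℝ}

lemma TransitionPt.not_forall_eq_of_mem_nhds (htr : TransitionPt b t) {S : Set ℝ}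
    (hS : S ∈ 𝓝 t) : ¬ ∀ s₁ ∈ S, ∀ s₂ ∈ S, b s₁ = b s₂ := by
  intro hconst
  obtain ⟨ε, hε, hball⟩ := Metric.mem_nhds_iff.mp hS
  obtain ⟨s₁, s₂, -, -, h₁, h₂, hne⟩ := htr.2 ε hε
  exact hne (hconst s₁ (hball h₁) s₂ (hball h₂))

lemma TransitionPt.notMem_Ioo_of_forall_eq (htr : TransitionPt b t) {u v : ℝ}
    (hconst : ∀ s₁ ∈ Icc u v, ∀ s₂ ∈ Icc u v, b s₁ = b s₂) : t ∉ Ioo u v :=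
  fun ht => htr.not_forall_eq_of_mem_nhds (Icc_mem_nhds ht.1 ht.2) hconst

lemma NonBerkeley.exists_window_notMem_Ioo (hb : NonBerkeley b δ) (htr : TransitionPt b t)
    {s : ℝ} (hs : 0 ≤ s) : ∃ u, u ≤ s ∧ s ≤ u + δ ∧ t ∉ Ioo u (u + δ) ∧
      ∀ s₁ ∈ Icc u (u + δ), ∀ s₂ ∈ Icc u (u + δ), b s₁ = b s₂ := by
  obtain ⟨u, -, hus, hsu, hconst⟩ := hb s hs
  exact ⟨u, hus, hsu, htr.notMem_Ioo_of_forall_eq hconst, hconst⟩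

lemma NonBerkeley.eq_of_le_of_lt_transitionPt (hb : NonBerkeley b δ) (htr : TransitionPt b t)
    {s₁ s₂ : ℝ} (h₀ : 0 ≤ s₁) (h₁ : t - δ < s₁) (h₁₂ : s₁ ≤ s₂) (h₂ : s₂ < t) :
    b s₁ = b s₂ := by
  obtain ⟨u, hus, hsu, hnot, hconst⟩ := hb.exists_window_notMem_Ioo htr (h₀.trans h₁₂)
  have hut : u + δ ≤ t := by
    by_contra! h
    exact hnot ⟨hus.trans_lt h₂, h⟩
  exact hconst s₁ ⟨by linarith, by linarith⟩ s₂ ⟨hus, hsu⟩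

lemma NonBerkeley.eq_of_transitionPt_lt_of_le (hb : NonBerkeley b δ) (htr : TransitionPt b t)
    {s₁ s₂ : ℝ} (h₁ : t < s₁) (h₁₂ : s₁ ≤ s₂) (h₂ : s₂ < t + δ) : b s₁ = b s₂ := by
  obtain ⟨u, hus, hsu, hnot, hconst⟩ := hb.exists_window_notMem_Ioo htr (htr.1.trans h₁.le)
  have htu : t ≤ u := by
    by_contra! h
    exact hnot ⟨h, h₁.trans_le hsu⟩
  exact hconst s₁ ⟨hus, hsu⟩ s₂ ⟨hus.trans h₁₂, by linarith⟩

end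

/-- At a transition point `t > 0` of a `δ`-non-Berkeley behavior, `b` is constant on
`(max(t-δ,0), t)` and on `(t, t+δ)`; in particular the left-limit value `b⁻(t)` and
the right-limit value `b⁺(t)` are well defined. -/
theorem constant_around_transition {P : Type*} (b : ℝ → Set P) (δ : ℝ) (hδ : 0 < δ)
    (hb : NonBerkeley b δ) (t : ℝ) (ht : 0 < t) (htr : TransitionPt b t) :
    (∀ s₁ ∈ Ioo (max (t - δ) 0) t, ∀ s₂ ∈ Ioo (max (t - δ) 0) t, b s₁ = b s₂) ∧
    (∀ s₁ ∈ Ioo t (t + δ), ∀ s₂ ∈ Ioo t (t + δ), b s₁ = b s₂) ∧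
    (∃ L : Set P, ∀ s ∈ Ioo (max (t - δ) 0) t, b s = L) ∧
    (∃ R : Set P, ∀ s ∈ Ioo t (t + δ), b s = R) := by
  have left : ∀ s₁ ∈ Ioo (max (t - δ) 0) t, ∀ s₂ ∈ Ioo (max (t - δ) 0) t, b s₁ = b s₂ :=
    eq_of_forall_le_imp_eq fun s₁ hs₁ s₂ hs₂ h₁₂ =>
      hb.eq_of_le_of_lt_transitionPt htr (le_max_right _ _ |>.trans hs₁.1.le)
        ((le_max_left _ _).trans_lt hs₁.1) h₁₂ hs₂.2
  have right : ∀ s₁ ∈ Ioo t (t + δ), ∀ s₂ ∈ Ioo t (t + δ), b s₁ = b s₂ :=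
    eq_of_forall_le_imp_eq fun s₁ hs₁ s₂ hs₂ h₁₂ =>
      hb.eq_of_transitionPt_lt_of_le htr hs₁.1 h₁₂ hs₂.2
  have left_ne : (Ioo (max (t - δ) 0) t).Nonempty := nonempty_Ioo.mpr (max_lt (by linarith) ht)
  have right_ne : (Ioo t (t + δ)).Nonempty := nonempty_Ioo.mpr (by linarith)
  exact ⟨left, right, exists_eq_of_forall_eq left_ne left,
    exists_eq_of_forall_eq right_ne right⟩
end

section
/- Let b : ℝ≥0 → Set P be non-Berkeley for δ > 0 and let x ∈ P. If x is triggered at t > δ (i.e., x ∈ b⁻(t) ⟺ x ∉ b⁺(t)), then for every s ∈ (t−δ, t), it holds that the membership of x in b is constant (with value b⁻(t)'s value) on [s, t) and constant (with value b⁺(t)'s value) on (t, s+δ]; in particular, x ∈ b(s) iff x ∈ b⁻(t), and x ∈ b(s+δ) iff x ∈ b⁺(t). -/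
open Set

/-- If `x` is triggered at `t > δ` (the left-limit value `L = b⁻(t)` and right-limit
value `R = b⁺(t)` disagree on `x`), then for every `s ∈ (t-δ, t)` the membership of `x`
in `b` is constant with value given by `L` on `[s, t)` and constant with value given by
`R` on `(t, s+δ]`; in particular `x ∈ b(s) ↔ x ∈ b⁻(t)` and `x ∈ b(s+δ) ↔ x ∈ b⁺(t)`. -/
theorem triggered_shift {P : Type*} (b : ℝ → Set P) (δ : ℝ) (hδ : 0 < δ)
    (hb : NonBerkeley b δ) (x : P) (t : ℝ) (ht : δ < t) (L R : Set P)
    (hL : ∃ ε > 0, ∀ r, t - ε < r → r < t → b r = L)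
    (hR : ∃ ε > 0, ∀ r, t < r → r < t + ε → b r = R)
    (htrig : x ∈ L ↔ x ∉ R) :
    ∀ s, t - δ < s → s < t →
      (∀ r, s ≤ r → r < t → (x ∈ b r ↔ x ∈ L)) ∧
      (∀ r, t < r → r ≤ s + δ → (x ∈ b r ↔ x ∈ R)) ∧
      (x ∈ b s ↔ x ∈ L) ∧ (x ∈ b (s + δ) ↔ x ∈ R) := by
  obtain ⟨εL, hεL, hLval⟩ := hL
  obtain ⟨εR, hεR, hRval⟩ := hR
  have hcontra : ¬(x ∈ L ↔ x ∈ R) := by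
    intro h
    by_cases hx : x ∈ L
    · exact (htrig.mp hx) (h.mp hx)
    · exact hx (htrig.mpr fun hr => hx (h.mpr hr))
  have htpos : 0 < t - δ := by linarith
  -- left key lemma
  have key_left : ∀ r, t - δ < r → r < t → b r = L := by
    intro r hr1 hr2
    set w := max r (t - εL / 2) with hw
    have hw1 : r ≤ w := le_max_left _ _
    have hw2 : t - εL < w := lt_of_lt_of_le (by linarith) (le_max_right _ _)
    have hwlt : w < t := max_lt hr2 (by linarith)
    have hwpos : 0 ≤ w := le_trans (le_of_lt (lt_trans htpos hr1)) hw1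
    obtain ⟨u, hu0, huw, hwu, hconst⟩ := hb w hwpos
    have hbw : b w = L := hLval w hw2 hwlt
    by_cases hcase : t < u + δ
    · exfalso
      set z := min (u + δ) (t + εR / 2) with hz
      have hz1 : t < z := lt_min hcase (by linarith)
      have hz2 : z < t + εR := lt_of_le_of_lt (min_le_right _ _) (by linarith)
      have hzmem : z ∈ Icc u (u + δ) :=
        ⟨le_of_lt (lt_of_le_of_lt (le_trans huw (le_of_lt hwlt)) hz1), min_le_left _ _⟩
      have hwmem : w ∈ Icc u (u + δ) := ⟨huw, hwu⟩
      have : b z = b w := hconst z hzmem w hwmem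
      have hbz : b z = R := hRval z hz1 hz2
      apply hcontra
      rw [← hbw, ← hbz, this]
    · push_neg at hcase
      have hrmem : r ∈ Icc u (u + δ) := ⟨by linarith, le_trans hw1 hwu⟩
      have hwmem : w ∈ Icc u (u + δ) := ⟨huw, hwu⟩
      rw [hconst r hrmem w hwmem, hbw]
  -- right key lemma
  have key_right : ∀ r, t < r → r < t + δ → b r = R := by
    intro r hr1 hr2
    set w := min r (t + εR / 2) with hw
    have hw1 : w ≤ r := min_le_left _ _
    have hw2 : w < t + εR := lt_of_le_of_lt (min_le_right _ _) (by linarith)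
    have hwgt : t < w := lt_min hr1 (by linarith)
    have hwpos : 0 ≤ w := le_of_lt (lt_trans (by linarith) hwgt)
    obtain ⟨u, hu0, huw, hwu, hconst⟩ := hb w hwpos
    have hbw : b w = R := hRval w hwgt hw2
    by_cases hcase : u < t
    · exfalso
      set z := max u (t - εL / 2) with hz
      have hz1 : z < t := max_lt hcase (by linarith)
      have hz2 : t - εL < z := lt_of_lt_of_le (by linarith) (le_max_right _ _)
      have hzmem : z ∈ Icc u (u + δ) :=
        ⟨le_max_left _ _, le_of_lt (lt_of_lt_of_le (lt_trans hz1 hwgt) hwu)⟩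
      have hwmem : w ∈ Icc u (u + δ) := ⟨huw, hwu⟩
      have : b z = b w := hconst z hzmem w hwmem
      have hbz : b z = L := hLval z hz2 hz1
      apply hcontra
      rw [← hbz, this, hbw]
    · push_neg at hcase
      have hrmem : r ∈ Icc u (u + δ) := ⟨le_trans huw hw1, by linarith⟩
      have hwmem : w ∈ Icc u (u + δ) := ⟨huw, hwu⟩
      rw [hconst r hrmem w hwmem, hbw]
  intro s hs1 hs2
  refine ⟨fun r hr1 hr2 => ?_, fun r hr1 hr2 => ?_, ?_, ?_⟩
  · rw [key_left r (lt_of_lt_of_le hs1 hr1) hr2]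
  · rw [key_right r hr1 (lt_of_le_of_lt hr2 (by linarith))]
  · rw [key_left s hs1 hs2]
  · rw [key_right (s + δ) (by linarith) (by linarith)]
end

section
/- Let b : ℝ≥0 → Set P be non-Berkeley for δ > 0 and let x, y ∈ P. If x is triggered at instant t₁ and y is triggered at instant t₂ with |t₁ − t₂| < δ, then t₁ = t₂. (Two distinct transition instants of a δ-non-Berkeley behavior cannot lie within δ of each other.) -/
open Set

/-- Proposition `x` is triggered at `t`: its truth value on a punctured left
neighborhood of `t` differs from its truth value on a punctured right neighborhood. -/
def TriggeredAt {P : Type*} (b : ℝ → Set P) (x : P) (t : ℝ) : Prop :=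
  ∃ ε > 0,
    ((∀ r, t - ε < r → r < t → x ∈ b r) ∧ (∀ r, t < r → r < t + ε → x ∉ b r)) ∨
    ((∀ r, t - ε < r → r < t → x ∉ b r) ∧ (∀ r, t < r → r < t + ε → x ∈ b r))

/-- Two trigger instants of a `δ`-non-Berkeley behavior lying within `δ` of each other
must coincide. -/
theorem triggers_within_delta_eq {P : Type*} (b : ℝ → Set P) (δ : ℝ) (hδ : 0 < δ)
    (hb : NonBerkeley b δ) (x y : P) (t₁ t₂ : ℝ) (ht₁ : 0 < t₁) (ht₂ : 0 < t₂)
    (hx : TriggeredAt b x t₁) (hy : TriggeredAt b y t₂) (hclose : |t₁ - t₂| < δ) :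
    t₁ = t₂ := by
  -- helper: a trigger cannot lie strictly inside an interval where b is constant
  have aux : ∀ (z : P) (t u v : ℝ), u < t → t < v →
      (∀ s₁ ∈ Icc u v, ∀ s₂ ∈ Icc u v, b s₁ = b s₂) → TriggeredAt b z t → False := by
    intro z t u v hut htv hc ⟨ε, hε, hcase⟩
    set r₁ := max u (t - ε / 2) with hr₁
    set r₂ := min v (t + ε / 2) with hr₂
    have hr₁t : r₁ < t := max_lt hut (by linarith)
    have hr₁ε : t - ε < r₁ := lt_of_lt_of_le (by linarith) (le_max_right _ _)
    have htr₂ : t < r₂ := lt_min htv (by linarith)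
    have hr₂ε : r₂ < t + ε := lt_of_le_of_lt (min_le_right _ _) (by linarith)
    have hmem₁ : r₁ ∈ Icc u v := ⟨le_max_left _ _, le_of_lt (lt_of_lt_of_le hr₁t (le_of_lt htv))⟩
    have hmem₂ : r₂ ∈ Icc u v := ⟨le_of_lt (lt_of_le_of_lt (le_of_lt hut) htr₂), min_le_left _ _⟩
    have heq : b r₁ = b r₂ := hc r₁ hmem₁ r₂ hmem₂
    rcases hcase with ⟨hl, hr⟩ | ⟨hl, hr⟩
    · exact hr r₂ htr₂ hr₂ε (heq ▸ hl r₁ hr₁ε hr₁t)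
    · exact hl r₁ hr₁ε hr₁t (heq ▸ hr r₂ htr₂ hr₂ε)
  -- helper: two triggers with t₁ < t₂ and t₂ - t₁ < δ is impossible
  have key : ∀ (z w : P) (s₁ s₂ : ℝ), 0 < s₁ → s₁ < s₂ → s₂ - s₁ < δ →
      TriggeredAt b z s₁ → TriggeredAt b w s₂ → False := by
    intro z w s₁ s₂ hs₁ hlt hd hz hw
    obtain ⟨u, hu0, hum, hmu, hc⟩ := hb ((s₁ + s₂) / 2) (by linarith)
    by_cases hcase : u < s₁
    · exact aux z s₁ u (u + δ) hcase (by linarith) hc hz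
    · push_neg at hcase
      exact aux w s₂ u (u + δ) (by linarith) (by linarith) hc hw
  rcases lt_trichotomy t₁ t₂ with h | h | h
  · rw [abs_sub_comm, abs_of_pos (by linarith)] at hclose
    exact absurd (key x y t₁ t₂ ht₁ h hclose hx hy) (fun f => f)
  · exact h
  · rw [abs_of_pos (by linarith)] at hclose
    exact absurd (key y x t₂ t₁ ht₂ h hclose hy hx) (fun f => f)
end

section
/- Over ℝ≥0 with behavior b non-Berkeley for δ and propositions x, y: the formula 'whenever x switches from false to true at t, y also switches from false to true at t' (synchronized transitions) is equivalent to the weakened formula 'whenever x switches from false to true at t, y was false on a punctured left neighborhood of t and at every instant s with s = t' + δ for t' in a right neighborhood of t, if x holds at s then y holds at s'. That is, ⇑(x) ⇒ ⇑(y) is equivalent over δ-non-Berkeley behaviors to ⇑(x) ⇒ (UpToNow(¬y) ∧ □_{=δ}(x ⇒ y)). -/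
open Set

/-- `⇑(z)` holds at `t`: `z` is false on a punctured left neighborhood of `t` and true
on a punctured right neighborhood of `t`. -/
def BecomesAt {P : Type*} (b : ℝ → Set P) (z : P) (t : ℝ) : Prop :=
  ∃ ε > 0, (∀ r, t - ε < r → r < t → z ∉ b r) ∧ (∀ r, t < r → r < t + ε → z ∈ b r)

/-- `UpToNow(¬y)` holds at `t`: `y` is false on some punctured left interval `(t-ε, t)`. -/
def UpToNowNot {P : Type*} (b : ℝ → Set P) (y : P) (t : ℝ) : Prop :=
  ∃ ε > 0, ∀ r, t - ε < r → r < t → y ∉ b r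

lemma const_after {P : Type*} (b : ℝ → Set P) (δ : ℝ) (hδ : 0 < δ)
    (hb : NonBerkeley b δ) (x : P) (t : ℝ) (ht : 0 < t) (hx : BecomesAt b x t) :
    ∀ s : ℝ, t < s → s ≤ t + δ → b s = b (t + δ) := by
  obtain ⟨ε, hε, hl, hr⟩ := hx
  intro s hs1 hs2
  obtain ⟨u, hu0, hus, hsu, hconst⟩ := hb s (by linarith)
  have hud : t < u + δ := by linarith
  have hut : t ≤ u := by
    by_contra h
    push_neg at h
    set r1 := (max u (t - ε) + t) / 2 with hr1
    set r2 := (t + min (u + δ) (t + ε)) / 2 with hr2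
    have hm1 : max u (t - ε) < t := max_lt h (by linarith)
    have hm2 : t < min (u + δ) (t + ε) := lt_min hud (by linarith)
    have h1a : u ≤ r1 := by
      have := le_max_left u (t - ε); simp only [hr1]; linarith
    have h1b : t - ε < r1 := by
      have := le_max_right u (t - ε); simp only [hr1]; linarith
    have h1c : r1 < t := by simp only [hr1]; linarith
    have h2a : t < r2 := by simp only [hr2]; linarith
    have h2b : r2 < t + ε := by
      have := min_le_right (u + δ) (t + ε); simp only [hr2]; linarith
    have h2c : r2 ≤ u + δ := by
      have := min_le_left (u + δ) (t + ε); simp only [hr2]; linarith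
    have heq : b r1 = b r2 :=
      hconst r1 ⟨h1a, by linarith⟩ r2 ⟨by linarith, h2c⟩
    exact hl r1 h1b h1c (heq ▸ hr r2 h2a h2b)
  exact hconst s ⟨hus, by linarith⟩ (t + δ) ⟨by linarith, by linarith⟩

/-- Over `δ`-non-Berkeley behaviors, the formula `⇑(x) ⇒ ⇑(y)` (synchronized
transitions) is equivalent to the weakened `⇑(x) ⇒ (UpToNow(¬y) ∧ □_{=δ}(x ⇒ y))`. -/
theorem becomes_weakening_equiv {P : Type*} (b : ℝ → Set P) (δ : ℝ) (hδ : 0 < δ)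
    (hb : NonBerkeley b δ) (x y : P) :
    (∀ t : ℝ, 0 < t → BecomesAt b x t → BecomesAt b y t) ↔
    (∀ t : ℝ, 0 < t → BecomesAt b x t →
      UpToNowNot b y t ∧ (x ∈ b (t + δ) → y ∈ b (t + δ))) := by
  constructor
  · intro h t ht hx
    obtain ⟨ε, hε, hyl, hyr⟩ := h t ht hx
    refine ⟨⟨ε, hε, hyl⟩, fun _ => ?_⟩
    set s := t + min ε δ / 2 with hs
    have hm : 0 < min ε δ := lt_min hε hδ
    have h1 : t < s := by simp only [hs]; linarith
    have h2 : s ≤ t + δ := by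
      have := min_le_right ε δ; simp only [hs]; linarith
    have h3 : s < t + ε := by
      have := min_le_left ε δ; simp only [hs]; linarith
    have := const_after b δ hδ hb x t ht hx s h1 h2
    exact this ▸ hyr s h1 h3
  · intro h t ht hx
    obtain ⟨⟨ε', hε', hyl⟩, hbox⟩ := h t ht hx
    obtain ⟨ε, hε, hxl, hxr⟩ := hx
    have hconst := const_after b δ hδ hb x t ht ⟨ε, hε, hxl, hxr⟩
    set s := t + min ε δ / 2 with hs
    have hm : 0 < min ε δ := lt_min hε hδ
    have h1 : t < s := by simp only [hs]; linarith
    have h2 : s ≤ t + δ := by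
      have := min_le_right ε δ; simp only [hs]; linarith
    have h3 : s < t + ε := by
      have := min_le_left ε δ; simp only [hs]; linarith
    have hxδ : x ∈ b (t + δ) := hconst s h1 h2 ▸ hxr s h1 h3
    have hyδ : y ∈ b (t + δ) := hbox hxδ
    refine ⟨min ε' δ, lt_min hε' hδ, fun r hr1 hr2 => ?_, fun r hr1 hr2 => ?_⟩
    · exact hyl r (by have := min_le_left ε' δ; linarith) hr2
    · have : r ≤ t + δ := by have := min_le_right ε' δ; linarith
      exact (hconst r hr1 this) ▸ hyδ
end

section
/- Let b : ℝ≥0 → Set P be non-Berkeley for δ, and let φ be a propositional formula. If ⇑(φ) holds at t (φ switches from false to true at t), then for all s ∈ (t, t+δ), φ holds at s; and for all s ∈ (max(t−δ,0), t), φ does not hold at s. In particular, □_{=δ}(φ) evaluated at any point of (t−δ, t) yields a point in (t, t+δ) where φ holds. -/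
/-!
A switch of `φ` at `t` cannot lie strictly inside a window `[u, u + δ]` on which the behavior is
constant, since such a window would meet both the false side and the true side of `t`. Hence the
non-Berkeley window around a point just after `t` starts at or after `t`, and spreads the value
`φ` has there up to `t + δ`; symmetrically, the window around a point just before `t` ends at or
before `t` and spreads `¬ φ` down to `t - δ`.
-/

open Set

/-- `⇑(φ)` for a propositional (state) formula `φ`: `φ` is false on a punctured left
neighborhood of `t` and true on a punctured right neighborhood of `t`. -/
def BecomesF {P : Type*} (b : ℝ → Set P) (φ : Set P → Prop) (t : ℝ) : Prop :=
  ∃ ε > 0, (∀ r, t - ε < r → r < t → ¬ φ (b r)) ∧ (∀ r, t < r → r < t + ε → φ (b r))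

namespace BecomesF

variable {P : Type*} {b : ℝ → Set P} {φ : Set P → Prop} {t : ℝ}

theorem notMem_Ioo_of_const (h : BecomesF b φ t) {u v : ℝ}
    (hconst : ∀ s₁ ∈ Icc u v, ∀ s₂ ∈ Icc u v, b s₁ = b s₂) : t ∉ Ioo u v := by
  rintro ⟨hut, htv⟩
  obtain ⟨ε, hε, hfalse, htrue⟩ := h
  obtain ⟨r₁, hr₁, hr₁t⟩ := exists_between (max_lt hut (by linarith : t - ε < t))
  obtain ⟨r₂, htr₂, hr₂⟩ := exists_between (lt_min htv (by linarith : t < t + ε))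
  rw [max_lt_iff] at hr₁
  rw [lt_min_iff] at hr₂
  refine hfalse r₁ hr₁.2 hr₁t ?_
  rw [hconst r₁ ⟨hr₁.1.le, by linarith⟩ r₂ ⟨by linarith, hr₂.1.le⟩]
  exact htrue r₂ htr₂ hr₂.2

theorem holds_of_nonBerkeley {δ : ℝ} (hb : NonBerkeley b δ) (h : BecomesF b φ t)
    (ht : 0 ≤ t) : ∀ s, t < s → s < t + δ → φ (b s) := by
  obtain ⟨ε, hε, -, htrue⟩ := id h
  obtain ⟨t₂, htt₂, ht₂ε⟩ := exists_between (by linarith : t < t + ε)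
  have hφ₂ : φ (b t₂) := htrue t₂ htt₂ ht₂ε
  obtain ⟨u, -, hu₂, hu₂δ, hconst⟩ := hb t₂ (by linarith)
  have htu : t ≤ u := by
    by_contra! hut
    exact h.notMem_Ioo_of_const hconst ⟨hut, by linarith⟩
  intro s hts hsδ
  rcases le_or_gt u s with hus | hsu
  · rwa [hconst s ⟨hus, by linarith⟩ t₂ ⟨hu₂, hu₂δ⟩]
  · exact htrue s hts (by linarith)

theorem not_holds_of_nonBerkeley {δ : ℝ} (hb : NonBerkeley b δ) (h : BecomesF b φ t)
    (ht : 0 < t) : ∀ s, t - δ < s → s < t → ¬ φ (b s) := by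
  obtain ⟨ε, hε, hfalse, -⟩ := id h
  obtain ⟨t₃, ht₃, ht₃t⟩ := exists_between (max_lt (by linarith : t - ε < t) ht)
  rw [max_lt_iff] at ht₃
  have hφ₃ : ¬ φ (b t₃) := hfalse t₃ ht₃.1 ht₃t
  obtain ⟨u, -, hu₃, hu₃δ, hconst⟩ := hb t₃ ht₃.2.le
  have hut : u + δ ≤ t := by
    by_contra! htu
    exact h.notMem_Ioo_of_const hconst ⟨by linarith, htu⟩
  intro s hδs hst
  rcases le_or_gt s t₃ with hs₃ | hs₃
  · rwa [hconst s ⟨by linarith, by linarith⟩ t₃ ⟨hu₃, hu₃δ⟩]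
  · exact hfalse s (by linarith) hst

end BecomesF

theorem becomes_spread_general {P : Type*} (b : ℝ → Set P) (δ : ℝ)
    (hb : NonBerkeley b δ) (φ : Set P → Prop) (t : ℝ) (ht : 0 < t)
    (hbec : BecomesF b φ t) :
    (∀ s, t < s → s < t + δ → φ (b s)) ∧
    (∀ s, max (t - δ) 0 < s → s < t → ¬ φ (b s)) ∧
    (∀ s, t - δ < s → s < t → φ (b (s + δ))) := by
  have hafter := hbec.holds_of_nonBerkeley hb ht.le
  refine ⟨hafter, fun s hs => ?_, fun s hδs hst => hafter (s + δ) (by linarith) (by linarith)⟩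
  exact hbec.not_holds_of_nonBerkeley hb ht s ((le_max_left _ _).trans_lt hs)

/-- If `⇑(φ)` holds at `t` then `φ` holds throughout `(t, t+δ)` and fails throughout
`(max(t-δ,0), t)`; in particular `□_{=δ}(φ)` evaluated at any point `s ∈ (t-δ, t)`
yields the point `s+δ ∈ (t, t+δ)` where `φ` holds. -/
theorem becomes_spread {P : Type*} (b : ℝ → Set P) (δ : ℝ) (hδ : 0 < δ)
    (hb : NonBerkeley b δ) (φ : Set P → Prop) (t : ℝ) (ht : 0 < t)
    (hbec : BecomesF b φ t) :
    (∀ s, t < s → s < t + δ → φ (b s)) ∧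
    (∀ s, max (t - δ) 0 < s → s < t → ¬ φ (b s)) ∧
    (∀ s, t - δ < s → s < t → φ (b (s + δ))) :=
  becomes_spread_general b δ hb φ t ht hbec
end
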